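/- Let A = (A_1,…,A_n) and B = (B_1,…,B_m) be commuting tuples of linear operators on a complex vector space V such that A ⊕ B = (A_1,…,A_n,B_1,…,B_m) is a commuting (n+m)-tuple. Fix k ∈ {0,…,n+m} and suppose H_p(A, H_q(B,V)) = 0 for all p ∈ {0,…,n}, q ∈ {0,…,m} with p + q = k. Then H_k(A ⊕ B, V) = 0. -/

import Mathlib

open Filter Topology
namespace KN
variable {V : Type*} [AddCommGroup V] [Module ℂ V]

noncomputable def koszulD {n : ℕ} (A : Fin n → Module.End ℂ V) (k : ℕ) :
    ({s : Finset (Fin n) // s.card = k + 1} → V) →ₗ[ℂ]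
      ({s : Finset (Fin n) // s.card = k} → V) where
  toFun f s := ∑ j ∈ (s : Finset (Fin n))ᶜ.attach,
    ((-1 : ℂ) ^ ((s : Finset (Fin n)).filter (· < (j : Fin n))).card) •
      A (j : Fin n) (f ⟨insert (j : Fin n) (s : Finset (Fin n)), by
        rw [Finset.card_insert_of_notMem (Finset.mem_compl.mp j.2), s.2]⟩)
  map_add' f g := by
    funext s
    simp [Pi.add_apply, map_add, smul_add, Finset.sum_add_distrib]
  map_smul' c f := by
    funext s
    simp only [Pi.smul_apply, map_smul, RingHom.id_apply, Finset.smul_sum]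
    exact Finset.sum_congr rfl fun j _ => smul_comm _ _ _

noncomputable def koszulDDown {n : ℕ} (A : Fin n → Module.End ℂ V) :
    (k : ℕ) → (({s : Finset (Fin n) // s.card = k} → V) →ₗ[ℂ]
      ({s : Finset (Fin n) // s.card = k - 1} → V))
  | 0 => 0
  | (k + 1) => koszulD A k

noncomputable abbrev koszulHomology {n : ℕ} (A : Fin n → Module.End ℂ V) (k : ℕ) :=
  LinearMap.ker (koszulDDown A k) ⧸
    (Submodule.comap (LinearMap.ker (koszulDDown A k)).subtype
      (LinearMap.range (koszulD A k)))


/-- A commuting tuple is Fredholm when all its Koszul homology groups are finite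
dimensional. -/
def KoszulFredholm {n : ℕ} (A : Fin n → Module.End ℂ V) : Prop :=
  ∀ k, FiniteDimensional ℂ (koszulHomology A k)

/-- The index of a Fredholm commuting tuple: minus the Euler characteristic of its
Koszul complex. -/
noncomputable def koszulIndex {n : ℕ} (A : Fin n → Module.End ℂ V) : ℤ :=
  ∑ k ∈ Finset.range (n + 1),
    (-1) ^ (k + 1) * (Module.finrank ℂ (koszulHomology A k) : ℤ)

/-- The tuple `A - λ`. -/
noncomputable def tupleSub {n : ℕ} (A : Fin n → Module.End ℂ V) (lam : Fin n → ℂ) :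
    Fin n → Module.End ℂ V :=
  fun i => A i - algebraMap ℂ (Module.End ℂ V) (lam i)

/-- The tuple `λ - A`. -/
noncomputable def subTuple {n : ℕ} (lam : Fin n → ℂ) (A : Fin n → Module.End ℂ V) :
    Fin n → Module.End ℂ V :=
  fun i => algebraMap ℂ (Module.End ℂ V) (lam i) - A i

/-- The Taylor spectrum of a commuting tuple: those `λ` for which the Koszul complex of
`A - λ` is not exact. -/
def taylorSpectrum {n : ℕ} (A : Fin n → Module.End ℂ V) : Set (Fin n → ℂ) :=
  {lam | ∃ k, Nontrivial (koszulHomology (tupleSub A lam) k)}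

lemma compLeft_koszulD {n : ℕ} (A : Fin n → Module.End ℂ V) (T : Module.End ℂ V)
    (hT : ∀ i, Commute T (A i)) (k : ℕ) :
    (T.compLeft {s : Finset (Fin n) // s.card = k}).comp (koszulD A k)
      = (koszulD A k).comp (T.compLeft _) := by
  have hpt : ∀ (i : Fin n) (y : V), T (A i y) = A i (T y) := fun i y => by
    have h := LinearMap.congr_fun ((hT i).eq) y
    simpa [Module.End.mul_apply] using h
  ext f s
  simp only [LinearMap.comp_apply, LinearMap.compLeft_apply, Function.comp_apply, koszulD,
    LinearMap.coe_mk, AddHom.coe_mk, map_sum, map_smul]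
  exact Finset.sum_congr rfl fun j _ => by rw [hpt]

lemma compLeft_koszulDDown {n : ℕ} (A : Fin n → Module.End ℂ V) (T : Module.End ℂ V)
    (hT : ∀ i, Commute T (A i)) (k : ℕ) :
    (T.compLeft {s : Finset (Fin n) // s.card = k - 1}).comp (koszulDDown A k)
      = (koszulDDown A k).comp (T.compLeft _) := by
  cases k with
  | zero => ext f s; simp [koszulDDown]
  | succ k => exact compLeft_koszulD A T hT k

open Classical in
/-- The endomorphism of Koszul homology induced by an operator `T` commuting with the
tuple `A` (junk value `0` if `T` does not commute with `A`). -/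
noncomputable def koszulInduced {n : ℕ} (A : Fin n → Module.End ℂ V) (T : Module.End ℂ V)
    (k : ℕ) : Module.End ℂ (koszulHomology A k) :=
  if hT : ∀ i, Commute T (A i) then
    Submodule.mapQ _ _
      ((T.compLeft _).restrict (p := LinearMap.ker (koszulDDown A k))
        (q := LinearMap.ker (koszulDDown A k))
        (fun x hx => by
          have h := LinearMap.congr_fun (compLeft_koszulDDown A T hT k) x
          simp only [LinearMap.comp_apply] at h
          simp only [LinearMap.mem_ker] at hx ⊢
          rw [← h, hx, map_zero]))
      (fun x hx => by
        simp only [Submodule.mem_comap, LinearMap.mem_range] at hx ⊢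
        obtain ⟨y, hy⟩ := hx
        refine ⟨(T.compLeft _) y, ?_⟩
        have h := LinearMap.congr_fun (compLeft_koszulD A T hT k) y
        simp only [LinearMap.comp_apply] at h
        rw [← h, hy]
        rfl)
  else 0

/-- The tuple induced by `A` on the Koszul homology of `B`. -/
noncomputable def inducedTuple {n m : ℕ} (B : Fin m → Module.End ℂ V)
    (A : Fin n → Module.End ℂ V) (k : ℕ) : Fin n → Module.End ℂ (koszulHomology B k) :=
  fun i => koszulInduced B (A i) k

/-- The generalized eigenspace of an endomorphism at `μ`: the union of the kernels of the
powers of `T - μ`. -/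
noncomputable def maxGenEig (T : Module.End ℂ V) (mu : ℂ) : Submodule ℂ V :=
  ⨆ k : ℕ, LinearMap.ker ((T - algebraMap ℂ (Module.End ℂ V) mu) ^ k)

/-- The joint generalized eigenspace of a tuple of endomorphisms at `λ`. -/
noncomputable def jointGenEig {n : ℕ} (T : Fin n → Module.End ℂ V) (lam : Fin n → ℂ) :
    Submodule ℂ V :=
  ⨅ i, maxGenEig (T i) (lam i)

/-- The local index at `λ` of a Fredholm commuting tuple `B` (in the intended application
`B = g(A)`) with respect to the "coordinate" tuple `A`: minus the Euler characteristic of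
the joint generalized eigenspaces at `λ`, inside the Koszul homology of `B`, of the tuple
induced by `A`. -/
noncomputable def localIndex {n m : ℕ} (B : Fin m → Module.End ℂ V)
    (A : Fin n → Module.End ℂ V) (lam : Fin n → ℂ) : ℤ :=
  ∑ k ∈ Finset.range (m + 1), (-1) ^ (k + 1) *
    (Module.finrank ℂ (jointGenEig (inducedTuple B A k) lam) : ℤ)

open Classical in
/-- The restriction of an endomorphism to an invariant submodule (junk value `0` if the
submodule is not invariant). -/
noncomputable def restrictEnd (p : Submodule ℂ V) (T : Module.End ℂ V) :
    Module.End ℂ ↥p :=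
  if h : ∀ x ∈ p, T x ∈ p then T.restrict h else 0

/-- The set of common zeroes of a family of functions inside a set `S`. -/
def zeroSetOn {n m : ℕ} (S : Set (Fin n → ℂ)) (g : Fin m → ((Fin n → ℂ) → ℂ)) :
    Set (Fin n → ℂ) :=
  {x ∈ S | ∀ j, g j x = 0}

section Hilbert

variable {H : Type*} [NormedAddCommGroup H] [InnerProductSpace ℂ H] [CompleteSpace H]

/-- The tuple of underlying linear endomorphisms of a tuple of bounded operators. -/
noncomputable def opEnd {n : ℕ} (A : Fin n → (H →L[ℂ] H)) : Fin n → Module.End ℂ H :=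
  fun i => (A i).toLinearMap

/-- The Taylor spectrum of a commuting tuple of bounded operators. -/
def opTaylorSpectrum {n : ℕ} (A : Fin n → (H →L[ℂ] H)) : Set (Fin n → ℂ) :=
  taylorSpectrum (opEnd A)

/-- The essential Taylor spectrum: `λ ∉ Sp_ess(A)` if and only if `A - λ` is Fredholm. -/
def essSpectrum {n : ℕ} (A : Fin n → (H →L[ℂ] H)) : Set (Fin n → ℂ) :=
  {lam | ¬ KoszulFredholm (tupleSub (opEnd A) lam)}

/-- Taylor's holomorphic functional calculus for a commuting tuple `A` of bounded
operators on a Hilbert space, with symbols holomorphic on an open neighbourhood `U` of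
the Taylor spectrum: a unital algebra homomorphism `f ↦ f(A)` into the commutant of `A`,
sending the coordinate functions to the members of `A` and satisfying the spectral
mapping property `Sp(f(A)) = f(Sp(A))` for tuple-valued symbols. -/
structure OpCalculus {n : ℕ} (A : Fin n → (H →L[ℂ] H)) (U : Set (Fin n → ℂ)) :
    Type _ where
  toFun : ((Fin n → ℂ) → ℂ) → (H →L[ℂ] H)
  isOpen_dom : IsOpen U
  spec_sub : opTaylorSpectrum A ⊆ U
  map_one' : toFun 1 = 1
  map_add' : ∀ f g, DifferentiableOn ℂ f U → DifferentiableOn ℂ g U →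
    toFun (f + g) = toFun f + toFun g
  map_mul' : ∀ f g, DifferentiableOn ℂ f U → DifferentiableOn ℂ g U →
    toFun (f * g) = toFun f * toFun g
  map_smul' : ∀ (c : ℂ) f, DifferentiableOn ℂ f U → toFun (c • f) = c • toFun f
  map_coord : ∀ i, toFun (fun z => z i) = A i
  commutes : ∀ f, DifferentiableOn ℂ f U → ∀ i, Commute (A i) (toFun f)
  spectral_mapping : ∀ (m : ℕ) (h : Fin m → ((Fin n → ℂ) → ℂ)),
    (∀ j, DifferentiableOn ℂ (h j) U) →
    opTaylorSpectrum (fun j => toFun (h j)) = (fun z j => h j z) '' opTaylorSpectrum A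

end Hilbert

/-- A holomorphic functional calculus for a commuting tuple of endomorphisms of a complex
vector space (used for tuples acting on finite dimensional homology spaces). -/
structure EndCalculus {n : ℕ} {V : Type*} [AddCommGroup V] [Module ℂ V]
    (A : Fin n → Module.End ℂ V) (U : Set (Fin n → ℂ)) : Type _ where
  toFun : ((Fin n → ℂ) → ℂ) → Module.End ℂ V
  isOpen_dom : IsOpen U
  spec_sub : taylorSpectrum A ⊆ U
  map_one' : toFun 1 = 1
  map_add' : ∀ f g, DifferentiableOn ℂ f U → DifferentiableOn ℂ g U →
    toFun (f + g) = toFun f + toFun g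
  map_mul' : ∀ f g, DifferentiableOn ℂ f U → DifferentiableOn ℂ g U →
    toFun (f * g) = toFun f * toFun g
  map_smul' : ∀ (c : ℂ) f, DifferentiableOn ℂ f U → toFun (c • f) = c • toFun f
  map_coord : ∀ i, toFun (fun z => z i) = A i
  commutes : ∀ f, DifferentiableOn ℂ f U → ∀ i, Commute (A i) (toFun f)
  spectral_mapping : ∀ (m : ℕ) (h : Fin m → ((Fin n → ℂ) → ℂ)),
    (∀ j, DifferentiableOn ℂ (h j) U) →
    taylorSpectrum (fun j => toFun (h j)) = (fun z j => h j z) '' taylorSpectrum A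



noncomputable instance germAlgebra {α : Type*} {l : Filter α} : Algebra ℂ (Filter.Germ l ℂ) :=
  Algebra.ofModule
    (fun c x y => by
      refine Filter.Germ.inductionOn₂ x y fun f g => ?_
      simp only [← Filter.Germ.coe_smul, ← Filter.Germ.coe_mul, smul_mul_assoc])
    (fun c x y => by
      refine Filter.Germ.inductionOn₂ x y fun f g => ?_
      simp only [← Filter.Germ.coe_smul, ← Filter.Germ.coe_mul, mul_smul_comm])

/-- The ring of germs at `x` of analytic functions: the subalgebra of the ring of germs
of functions at `x` consisting of germs having an analytic representative. -/
noncomputable def analyticGermsAt {n : ℕ} (x : Fin n → ℂ) :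
    Subalgebra ℂ (Filter.Germ (𝓝 x) ℂ) where
  carrier := {φ | ∃ f : (Fin n → ℂ) → ℂ, AnalyticAt ℂ f x ∧ φ = ↑f}
  mul_mem' := by
    rintro a b ⟨f, hf, rfl⟩ ⟨g, hg, rfl⟩
    exact ⟨f * g, hf.mul hg, rfl⟩
  add_mem' := by
    rintro a b ⟨f, hf, rfl⟩ ⟨g, hg, rfl⟩
    exact ⟨f + g, hf.add hg, rfl⟩
  algebraMap_mem' := fun c => ⟨fun _ => c, analyticAt_const, by
    rw [Algebra.algebraMap_eq_smul_one, ← Filter.Germ.coe_one (l := 𝓝 x),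
      ← Filter.Germ.coe_smul]
    congr 1
    funext z
    simp⟩

/-- The local degree (intersection multiplicity) at `x` of an `n`-tuple `g` of functions
of `n` complex variables: the dimension of the quotient of the ring of germs of analytic
functions at `x` by the ideal generated by the germs of the components of `g`. -/
noncomputable def localDegree {n : ℕ} (g : Fin n → ((Fin n → ℂ) → ℂ)) (x : Fin n → ℂ) : ℕ :=
  Module.finrank ℂ
    (↥(analyticGermsAt x) ⧸ Ideal.span
      {y : ↥(analyticGermsAt x) | ∃ i, (y : Filter.Germ (𝓝 x) ℂ) = ↑(g i)})


/-- The ring `O(S)` of germs of holomorphic functions on (open neighbourhoods of) a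
compact set `S`: the subalgebra of the ring of germs of functions along the neighbourhood
filter of `S` consisting of germs having a representative holomorphic on an open
neighbourhood of `S`. -/
noncomputable def holGermsOn {n : ℕ} (S : Set (Fin n → ℂ)) :
    Subalgebra ℂ (Filter.Germ (𝓝ˢ S) ℂ) where
  carrier := {φ | ∃ f : (Fin n → ℂ) → ℂ, ∃ U : Set (Fin n → ℂ),
    IsOpen U ∧ S ⊆ U ∧ DifferentiableOn ℂ f U ∧ φ = ↑f}
  mul_mem' := by
    rintro a b ⟨f, U, hU, hSU, hf, rfl⟩ ⟨g, W, hW, hSW, hg, rfl⟩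
    exact ⟨f * g, U ∩ W, hU.inter hW, Set.subset_inter hSU hSW,
      (hf.mono Set.inter_subset_left).mul (hg.mono Set.inter_subset_right), rfl⟩
  add_mem' := by
    rintro a b ⟨f, U, hU, hSU, hf, rfl⟩ ⟨g, W, hW, hSW, hg, rfl⟩
    exact ⟨f + g, U ∩ W, hU.inter hW, Set.subset_inter hSU hSW,
      (hf.mono Set.inter_subset_left).add (hg.mono Set.inter_subset_right), rfl⟩
  algebraMap_mem' := fun c => ⟨fun _ => c, Set.univ, isOpen_univ, Set.subset_univ _,
    (differentiable_const c).differentiableOn, by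
      rw [Algebra.algebraMap_eq_smul_one, ← Filter.Germ.coe_one (l := 𝓝ˢ S),
        ← Filter.Germ.coe_smul]
      congr 1
      funext z
      simp⟩

/-- Evaluation of a germ along the neighbourhood filter of `S` at a point of `S`. -/
noncomputable def germValue {n : ℕ} {S : Set (Fin n → ℂ)} {x : Fin n → ℂ} (hx : x ∈ S)
    (φ : Filter.Germ (𝓝ˢ S) ℂ) : ℂ :=
  Filter.Germ.liftOn φ (fun f => f x) fun _f _g hfg => subset_of_mem_nhdsSet hfg hx

@[simp] lemma germValue_coe {n : ℕ} {S : Set (Fin n → ℂ)} {x : Fin n → ℂ} (hx : x ∈ S)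
    (f : (Fin n → ℂ) → ℂ) : germValue hx (↑f) = f x := rfl

lemma germValue_mul {n : ℕ} {S : Set (Fin n → ℂ)} {x : Fin n → ℂ} (hx : x ∈ S)
    (φ ψ : Filter.Germ (𝓝ˢ S) ℂ) :
    germValue hx (φ * ψ) = germValue hx φ * germValue hx ψ :=
  Filter.Germ.inductionOn₂ φ ψ fun _f _g => rfl

lemma germValue_one {n : ℕ} {S : Set (Fin n → ℂ)} {x : Fin n → ℂ} (hx : x ∈ S) :
    germValue hx (1 : Filter.Germ (𝓝ˢ S) ℂ) = 1 := rfl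

/-- The multiplicative set of germs of holomorphic functions not vanishing at a given
point `x ∈ S`; the complement of the prime ideal `p_x`. -/
noncomputable def nonvanishingGerms {n : ℕ} (S : Set (Fin n → ℂ)) {x : Fin n → ℂ}
    (hx : x ∈ S) : Submonoid ↥(holGermsOn S) where
  carrier := {f | germValue hx (f : Filter.Germ (𝓝ˢ S) ℂ) ≠ 0}
  one_mem' := by
    simp only [Set.mem_setOf_eq, OneMemClass.coe_one, germValue_one hx]
    exact one_ne_zero
  mul_mem' := by
    intro a b ha hb
    simp only [Set.mem_setOf_eq, MulMemClass.coe_mul, germValue_mul hx] at *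
    exact mul_ne_zero ha hb

lemma coord_mem_holGermsOn {n : ℕ} (S : Set (Fin n → ℂ)) (i : Fin n) :
    (↑(fun z : Fin n → ℂ => z i) : Filter.Germ (𝓝ˢ S) ℂ) ∈ holGermsOn S :=
  ⟨fun z => z i, Set.univ, isOpen_univ, Set.subset_univ _,
    ((ContinuousLinearMap.proj (R := ℂ) (φ := fun _ : Fin n => ℂ)
      i).differentiable).differentiableOn, rfl⟩

/-- Scalar multiplication by a ring element as a `ℂ`-linear endomorphism of a module over
a commutative `ℂ`-algebra. -/
noncomputable def smulEnd {R : Type*} [CommRing R] [Algebra ℂ R] {L : Type*}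
    [AddCommGroup L] [Module ℂ L] [Module R L] [IsScalarTower ℂ R L] (r : R) :
    Module.End ℂ L where
  toFun x := r • x
  map_add' := smul_add r
  map_smul' c x := by
    show r • (c • x) = c • (r • x)
    rw [← algebraMap_smul R c x, ← algebraMap_smul R c (r • x), smul_smul, smul_smul,
      mul_comm]


/-- Taylor's holomorphic functional calculus for a commuting tuple of bounded operators,
as a unital algebra homomorphism defined on the ring of germs of holomorphic functions on
neighbourhoods of the Taylor spectrum, sending coordinate germs to the members of the
tuple and satisfying the spectral mapping property. -/
structure GermCalculus {n : ℕ} {H : Type*} [NormedAddCommGroup H]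
    [InnerProductSpace ℂ H] [CompleteSpace H] (A : Fin n → (H →L[ℂ] H)) : Type _ where
  toFun : ↥(holGermsOn (opTaylorSpectrum A)) → (H →L[ℂ] H)
  map_one' : toFun 1 = 1
  map_add' : ∀ f g, toFun (f + g) = toFun f + toFun g
  map_mul' : ∀ f g, toFun (f * g) = toFun f * toFun g
  map_algebraMap' : ∀ c : ℂ, toFun (algebraMap ℂ _ c) = algebraMap ℂ _ c
  map_coord : ∀ i, toFun ⟨_, coord_mem_holGermsOn (opTaylorSpectrum A) i⟩ = A i
  commutes : ∀ f i, Commute (A i) (toFun f)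
  spectral_mapping : ∀ (m : ℕ) (h : Fin m → ↥(holGermsOn (opTaylorSpectrum A))),
    opTaylorSpectrum (fun j => toFun (h j)) =
      {mu | ∃ x, ∃ hx : x ∈ opTaylorSpectrum A,
        ∀ j, germValue hx ((h j : Filter.Germ (𝓝ˢ (opTaylorSpectrum A)) ℂ)) = mu j}

/-!
The Koszul complex of `A ⊕ B` is the total complex of the double complex
`K_p(A) ⊗ K_q(B) ⊗ V`, whose `E²` page is `H_p(A, H_q(B, V))`. A `k`-cycle `x` is killed one
`A`-degree at a time, from the top: the top component `G` of `x` in bidegree `(p, q)` is a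
`B`-cycle whose class is an `A`-cycle of `K_p(A, H_q(B, V))`, so the vanishing of
`E²_{p,q}` gives `G = d_A Y + d_B Z` with `Y` made of `B`-cycles, and subtracting the total
boundary of `Y ± Z` from `x` removes the component of `A`-degree `p` without creating any of
higher `A`-degree.
-/

abbrev KoszulChain (N k : ℕ) (V : Type*) := {s : Finset (Fin N) // s.card = k} → V

section KoszulComplex

variable {N : ℕ}

def extendByZero {X : Type*} [Zero X] {k : ℕ} (f : KoszulChain N k X) (u : Finset (Fin N)) :
    X :=
  if h : u.card = k then f ⟨u, h⟩ else 0

lemma extendByZero_of_card {X : Type*} [Zero X] {k : ℕ} (f : KoszulChain N k X)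
    {u : Finset (Fin N)} (h : u.card = k) : extendByZero f u = f ⟨u, h⟩ :=
  dif_pos h

lemma koszulD_apply_eq_sum (C : Fin N → Module.End ℂ V) {k : ℕ} (f : KoszulChain N (k + 1) V)
    (s : {s : Finset (Fin N) // s.card = k}) :
    koszulD C k f s = ∑ j ∈ (s : Finset (Fin N))ᶜ,
      ((-1 : ℂ) ^ ((s : Finset (Fin N)).filter (· < j)).card) •
        C j (extendByZero f (insert j (s : Finset (Fin N)))) := by
  rw [← Finset.sum_attach]
  refine Finset.sum_congr rfl fun j _ => ?_
  rw [extendByZero_of_card]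

lemma card_filter_lt_insert {s : Finset (Fin N)} {j : Fin N} (h : j ∉ s) (i : Fin N) :
    ((insert j s).filter (· < i)).card = (s.filter (· < i)).card + if j < i then 1 else 0 := by
  rw [Finset.filter_insert]
  split
  · rw [Finset.card_insert_of_notMem fun hj => h (Finset.mem_of_mem_filter _ hj)]
  · rw [add_zero]

lemma koszulSign_insert_swap {s : Finset (Fin N)} {i j : Fin N} (hi : i ∉ s) (hj : j ∉ s)
    (hij : i ≠ j) :
    (-1 : ℂ) ^ (s.filter (· < j)).card * (-1) ^ ((insert j s).filter (· < i)).card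
      = -((-1) ^ (s.filter (· < i)).card * (-1) ^ ((insert i s).filter (· < j)).card) := by
  rw [card_filter_lt_insert hj, card_filter_lt_insert hi]
  rcases hij.lt_or_gt with h | h <;> simp [h, h.not_gt, pow_succ, mul_comm]

lemma sum_sum_eq_zero_of_antisymm {ι : Type*} (s : Finset ι) (f : ι → ι → V)
    (hf : ∀ i ∈ s, ∀ j ∈ s, f i j = -f j i) : ∑ i ∈ s, ∑ j ∈ s, f i j = 0 := by
  set S := ∑ i ∈ s, ∑ j ∈ s, f i j
  have hS : S = -S := calc
    S = ∑ j ∈ s, ∑ i ∈ s, f i j := Finset.sum_comm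
    _ = -S := by
      simp only [S, ← Finset.sum_neg_distrib]
      exact Finset.sum_congr rfl fun j hj => Finset.sum_congr rfl fun i hi => hf i hi j hj
  have h2S : (2 : ℂ) • S = 0 := by
    rw [two_smul]
    nth_rewrite 2 [hS]
    exact add_neg_cancel S
  exact (smul_eq_zero.mp h2S).resolve_left two_ne_zero

lemma koszulD_koszulD (C : Fin N → Module.End ℂ V) (hC : ∀ i j, Commute (C i) (C j)) (k : ℕ)
    (g : KoszulChain N (k + 2) V) : koszulD C k (koszulD C (k + 1) g) = 0 := by
  funext ⟨s, hs⟩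
  set ε : Finset (Fin N) → Fin N → ℂ := fun s j => (-1) ^ (s.filter (· < j)).card
  set T : Fin N → Fin N → V := fun j i => if i = j then 0 else
    (ε s j * ε (insert j s) i) • C j (C i (extendByZero g (insert i (insert j s))))
  have hT : ∀ j ∈ sᶜ, ε s j • C j (extendByZero (koszulD C (k + 1) g) (insert j s))
      = ∑ i ∈ sᶜ, T j i := by
    intro j hj
    rw [Finset.mem_compl] at hj
    rw [extendByZero_of_card _ (by rw [Finset.card_insert_of_notMem hj, hs]),
      koszulD_apply_eq_sum, Finset.compl_insert, ← Finset.sum_erase _ (f := T j) (if_pos rfl),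
      map_sum, Finset.smul_sum]
    refine Finset.sum_congr rfl fun i hi => ?_
    simp only [T, if_neg (Finset.ne_of_mem_erase hi), map_smul, smul_smul]
    rfl
  have hT_antisymm : ∀ j ∈ sᶜ, ∀ i ∈ sᶜ, T j i = -T i j := by
    intro j hj i hi
    by_cases hij : i = j
    · simp [T, hij]
    simp only [T, if_neg hij, if_neg (Ne.symm hij), Finset.insert_comm i j, ε,
      koszulSign_insert_swap (Finset.mem_compl.mp hj) (Finset.mem_compl.mp hi) (Ne.symm hij),
      neg_smul, neg_neg, ← Module.End.mul_apply, (hC i j).eq]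
  rw [koszulD_apply_eq_sum, Finset.sum_congr rfl hT]
  exact sum_sum_eq_zero_of_antisymm _ T hT_antisymm

lemma koszulDDown_koszulD (C : Fin N → Module.End ℂ V) (hC : ∀ i j, Commute (C i) (C j))
    (k : ℕ) (w : KoszulChain N (k + 1) V) : koszulDDown C k (koszulD C k w) = 0 := by
  cases k with
  | zero => rfl
  | succ k => exact koszulD_koszulD C hC k w

lemma subsingleton_koszulHomology_iff (C : Fin N → Module.End ℂ V) (k : ℕ) :
    Subsingleton (koszulHomology C k) ↔
      ∀ x, koszulDDown C k x = 0 → x ∈ LinearMap.range (koszulD C k) := by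
  rw [Submodule.Quotient.subsingleton_iff, Submodule.comap_subtype_eq_top, SetLike.le_def]
  rfl

lemma subsingleton_koszulHomology_of_length_lt (C : Fin N → Module.End ℂ V) {k : ℕ}
    (hk : N < k) : Subsingleton (koszulHomology C k) := by
  have : IsEmpty {s : Finset (Fin N) // s.card = k} :=
    ⟨fun s => by have := s.1.card_le_univ; simp at this; omega⟩
  infer_instance

lemma subsingleton_koszulHomology_of_subsingleton [Subsingleton V]
    (C : Fin N → Module.End ℂ V) (k : ℕ) : Subsingleton (koszulHomology C k) := by
  infer_instance

variable {W : Type*} [AddCommGroup W] [Module ℂ W]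

lemma koszulD_comp_of_comp_eq (φ : V →ₗ[ℂ] W) {C : Fin N → Module.End ℂ V}
    {D : Fin N → Module.End ℂ W} (h : ∀ i, φ ∘ₗ C i = D i ∘ₗ φ) (k : ℕ)
    (f : KoszulChain N (k + 1) V) : koszulD D k (φ ∘ f) = φ ∘ koszulD C k f := by
  funext s
  simp only [koszulD, LinearMap.coe_mk, AddHom.coe_mk, Function.comp_apply, map_sum, map_smul]
  exact Finset.sum_congr rfl fun j _ => by rw [← LinearMap.comp_apply, ← h]; rfl

lemma koszulDDown_comp_of_comp_eq (φ : V →ₗ[ℂ] W) {C : Fin N → Module.End ℂ V}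
    {D : Fin N → Module.End ℂ W} (h : ∀ i, φ ∘ₗ C i = D i ∘ₗ φ) (k : ℕ)
    (f : KoszulChain N k V) : koszulDDown D k (φ ∘ f) = φ ∘ koszulDDown C k f := by
  cases k with
  | zero => funext s; exact (map_zero φ).symm
  | succ k => exact koszulD_comp_of_comp_eq φ h k f

end KoszulComplex

section FinsetAppend

variable {n m : ℕ}

lemma castAdd_ne_natAdd (i : Fin n) (j : Fin m) : Fin.castAdd m i ≠ Fin.natAdd n j := by
  simp [Fin.ext_iff]; omega

lemma castAdd_lt_natAdd (i : Fin n) (j : Fin m) : Fin.castAdd m i < Fin.natAdd n j := by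
  rw [Fin.lt_def, Fin.val_castAdd, Fin.val_natAdd]; omega

lemma castAdd_lt_castAdd_iff {i j : Fin n} : Fin.castAdd m i < Fin.castAdd m j ↔ i < j :=
  Iff.rfl

def joinFinset (s : Finset (Fin n)) (t : Finset (Fin m)) : Finset (Fin (n + m)) :=
  (s.disjSum t).map finSumFinEquiv.toEmbedding

def lowerPart (u : Finset (Fin (n + m))) : Finset (Fin n) :=
  (u.map finSumFinEquiv.symm.toEmbedding).toLeft

def upperPart (u : Finset (Fin (n + m))) : Finset (Fin m) :=
  (u.map finSumFinEquiv.symm.toEmbedding).toRight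

@[simp] lemma castAdd_mem_joinFinset {s : Finset (Fin n)} {t : Finset (Fin m)} {j : Fin n} :
    Fin.castAdd m j ∈ joinFinset s t ↔ j ∈ s := by
  simp [joinFinset, Finset.mem_map_equiv]

@[simp] lemma natAdd_mem_joinFinset {s : Finset (Fin n)} {t : Finset (Fin m)} {j : Fin m} :
    Fin.natAdd n j ∈ joinFinset s t ↔ j ∈ t := by
  simp [joinFinset, Finset.mem_map_equiv]

lemma card_joinFinset (s : Finset (Fin n)) (t : Finset (Fin m)) :
    (joinFinset s t).card = s.card + t.card := by
  rw [joinFinset, Finset.card_map, Finset.card_disjSum]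

@[simp] lemma lowerPart_joinFinset (s : Finset (Fin n)) (t : Finset (Fin m)) :
    lowerPart (joinFinset s t) = s := by
  simp [lowerPart, joinFinset, Finset.map_map]

@[simp] lemma upperPart_joinFinset (s : Finset (Fin n)) (t : Finset (Fin m)) :
    upperPart (joinFinset s t) = t := by
  simp [upperPart, joinFinset, Finset.map_map]

lemma joinFinset_lowerPart_upperPart (u : Finset (Fin (n + m))) :
    joinFinset (lowerPart u) (upperPart u) = u := by
  simp [lowerPart, upperPart, joinFinset, Finset.toLeft_disjSum_toRight, Finset.map_map]

lemma card_lowerPart_add_card_upperPart (u : Finset (Fin (n + m))) :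
    (lowerPart u).card + (upperPart u).card = u.card := by
  rw [← card_joinFinset, joinFinset_lowerPart_upperPart]

lemma card_lowerPart_le_card (u : Finset (Fin (n + m))) : (lowerPart u).card ≤ u.card := by
  rw [← card_lowerPart_add_card_upperPart u]; omega

lemma compl_joinFinset (s : Finset (Fin n)) (t : Finset (Fin m)) :
    (joinFinset s t)ᶜ = joinFinset sᶜ tᶜ := by
  ext j
  refine Fin.addCases (fun j => ?_) (fun j => ?_) j <;> simp

lemma insert_castAdd_joinFinset (j : Fin n) (s : Finset (Fin n)) (t : Finset (Fin m)) :
    insert (Fin.castAdd m j) (joinFinset s t) = joinFinset (insert j s) t := by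
  ext i
  refine Fin.addCases (fun i => ?_) (fun i => ?_) i <;>
    simp [Fin.castAdd_inj, (castAdd_ne_natAdd _ _).symm]

lemma insert_natAdd_joinFinset (j : Fin m) (s : Finset (Fin n)) (t : Finset (Fin m)) :
    insert (Fin.natAdd n j) (joinFinset s t) = joinFinset s (insert j t) := by
  ext i
  refine Fin.addCases (fun i => ?_) (fun i => ?_) i <;> simp [castAdd_ne_natAdd]

lemma sum_joinFinset {M : Type*} [AddCommMonoid M] (s : Finset (Fin n)) (t : Finset (Fin m))
    (g : Fin (n + m) → M) :
    ∑ j ∈ joinFinset s t, g j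
      = ∑ j ∈ s, g (Fin.castAdd m j) + ∑ j ∈ t, g (Fin.natAdd n j) := by
  simp [joinFinset, Finset.sum_disjSum]

lemma card_filter_lt_castAdd (s : Finset (Fin n)) (t : Finset (Fin m)) (j : Fin n) :
    ((joinFinset s t).filter (· < Fin.castAdd m j)).card = (s.filter (· < j)).card := by
  have : (joinFinset s t).filter (· < Fin.castAdd m j) = joinFinset (s.filter (· < j)) ∅ := by
    ext i
    refine Fin.addCases (fun i => ?_) (fun i => ?_) i <;>
      simp [castAdd_lt_castAdd_iff, (castAdd_lt_natAdd _ _).not_gt]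
  rw [this, card_joinFinset, Finset.card_empty, add_zero]

lemma card_filter_lt_natAdd (s : Finset (Fin n)) (t : Finset (Fin m)) (j : Fin m) :
    ((joinFinset s t).filter (· < Fin.natAdd n j)).card = s.card + (t.filter (· < j)).card := by
  have : (joinFinset s t).filter (· < Fin.natAdd n j) = joinFinset s (t.filter (· < j)) := by
    ext i
    refine Fin.addCases (fun i => ?_) (fun i => ?_) i <;>
      simp [castAdd_lt_natAdd, Fin.natAdd_lt_natAdd_iff]
  rw [this, card_joinFinset]

end FinsetAppend

section Blocks

variable {n m : ℕ}

def compLeftTuple {N : ℕ} (A : Fin N → Module.End ℂ V) (ι : Type*) :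
    Fin N → Module.End ℂ (ι → V) :=
  fun i => (A i).compLeft ι

/-- The component of a chain of `A ⊕ B` in bidegree `(p, q)` of the double complex
`K_p(A) ⊗ K_q(B) ⊗ V`. -/
def block {k p q : ℕ} (hpq : p + q = k) :
    KoszulChain (n + m) k V →ₗ[ℂ] KoszulChain n p (KoszulChain m q V) where
  toFun x s t := x ⟨joinFinset s t, by rw [card_joinFinset, s.2, t.2, hpq]⟩
  map_add' _ _ := rfl
  map_smul' _ _ := rfl

lemma block_apply {k p q : ℕ} (hpq : p + q = k) (x : KoszulChain (n + m) k V) (s t) :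
    block hpq x s t = x ⟨joinFinset s t, by rw [card_joinFinset, s.2, t.2, hpq]⟩ :=
  rfl

lemma apply_eq_block {k : ℕ} (x : KoszulChain (n + m) k V)
    (u : {u : Finset (Fin (n + m)) // u.card = k}) :
    x u = block (by rw [card_lowerPart_add_card_upperPart, u.2]) x
      ⟨lowerPart u.1, rfl⟩ ⟨upperPart u.1, rfl⟩ := by
  rw [block_apply]
  congr
  exact Subtype.ext (joinFinset_lowerPart_upperPart _).symm

lemma block_koszulD_append (A : Fin n → Module.End ℂ V) (B : Fin m → Module.End ℂ V)
    {K p q : ℕ} (hpq : p + q = K) (f : KoszulChain (n + m) (K + 1) V) (s t) :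
    block hpq (koszulD (Fin.append A B) K f) s t =
      koszulD (compLeftTuple A _) p (block (by omega : p + 1 + q = K + 1) f) s t
        + (-1 : ℂ) ^ p • koszulD B q (block (by omega : p + (q + 1) = K + 1) f s) t := by
  rw [block_apply, koszulD_apply_eq_sum, koszulD_apply_eq_sum, koszulD_apply_eq_sum,
    compl_joinFinset, sum_joinFinset, Finset.sum_apply, Finset.smul_sum]
  congr 1
  · refine Finset.sum_congr rfl fun j hj => ?_
    rw [Finset.mem_compl] at hj
    rw [card_filter_lt_castAdd, Fin.append_left, insert_castAdd_joinFinset,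
      extendByZero_of_card _
        (by rw [card_joinFinset, Finset.card_insert_of_notMem hj, s.2, t.2]; omega),
      extendByZero_of_card _ (by rw [Finset.card_insert_of_notMem hj, s.2])]
    rfl
  · refine Finset.sum_congr rfl fun j hj => ?_
    rw [Finset.mem_compl] at hj
    rw [card_filter_lt_natAdd, Fin.append_right, insert_natAdd_joinFinset, s.2, pow_add,
      ← smul_smul,
      extendByZero_of_card _
        (by rw [card_joinFinset, Finset.card_insert_of_notMem hj, s.2, t.2]; omega),
      extendByZero_of_card _ (by rw [Finset.card_insert_of_notMem hj, t.2])]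
    rfl

def ofBlock {k p q : ℕ} (hpq : p + q = k) (F : KoszulChain n p (KoszulChain m q V)) :
    KoszulChain (n + m) k V := fun u =>
  if hu : (lowerPart u.1).card = p then
    F ⟨lowerPart u.1, hu⟩ ⟨upperPart u.1, by
      have := card_lowerPart_add_card_upperPart u.1; have := u.2; omega⟩
  else 0

lemma block_ofBlock {k p q : ℕ} (hpq : p + q = k) (F : KoszulChain n p (KoszulChain m q V)) :
    block hpq (ofBlock hpq F) = F := by
  funext s t
  rw [block_apply, ofBlock, dif_pos (by rw [lowerPart_joinFinset, s.2])]
  congr <;> simp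

lemma block_ofBlock_of_ne {k p q p' q' : ℕ} (hpq : p + q = k) (hpq' : p' + q' = k)
    (hp : p' ≠ p) (F : KoszulChain n p (KoszulChain m q V)) : block hpq' (ofBlock hpq F) = 0 := by
  funext s t
  rw [block_apply, ofBlock, dif_neg (by rw [lowerPart_joinFinset, s.2]; exact hp)]
  rfl

def IsSupportedBelow {k : ℕ} (P : ℕ) (x : KoszulChain (n + m) k V) : Prop :=
  ∀ u : {u : Finset (Fin (n + m)) // u.card = k}, P ≤ (lowerPart u.1).card → x u = 0

lemma block_eq_zero_of_isSupportedBelow {k P p q : ℕ} {x : KoszulChain (n + m) k V}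
    (hx : IsSupportedBelow P x) (hpq : p + q = k) (hp : P ≤ p) : block hpq x = 0 := by
  funext s t
  exact hx _ (by rw [lowerPart_joinFinset, s.2]; exact hp)

end Blocks

section InducedTuple

variable {n m : ℕ} (A : Fin n → Module.End ℂ V) (B : Fin m → Module.End ℂ V)

noncomputable def cycleTuple (hAB : ∀ i j, Commute (A i) (B j)) (q : ℕ) :
    Fin n → Module.End ℂ (LinearMap.ker (koszulDDown B q)) := fun i =>
  ((A i).compLeft _).restrict fun x hx => by
    rw [LinearMap.mem_ker] at hx ⊢
    rw [← LinearMap.comp_apply, ← compLeft_koszulDDown B (A i) (hAB i) q, LinearMap.comp_apply,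
      hx, map_zero]

lemma subtype_comp_cycleTuple (hAB : ∀ i j, Commute (A i) (B j)) (q : ℕ) (i : Fin n) :
    (LinearMap.ker (koszulDDown B q)).subtype ∘ₗ cycleTuple A B hAB q i
      = compLeftTuple A _ i ∘ₗ (LinearMap.ker (koszulDDown B q)).subtype :=
  LinearMap.subtype_comp_restrict _

noncomputable abbrev toKoszulHomology (q : ℕ) :
    LinearMap.ker (koszulDDown B q) →ₗ[ℂ] koszulHomology B q :=
  Submodule.mkQ _

lemma toKoszulHomology_comp_cycleTuple (hAB : ∀ i j, Commute (A i) (B j)) (q : ℕ) (i : Fin n) :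
    toKoszulHomology B q ∘ₗ cycleTuple A B hAB q i
      = koszulInduced B (A i) q ∘ₗ toKoszulHomology B q := by
  rw [koszulInduced, dif_pos (hAB i), Submodule.mapQ_mkQ]
  rfl

/-- The vanishing of `E²_{p,q} = H_p(A, H_q(B, V))`, read on chains. -/
lemma exists_eq_koszulD_add_koszulD (hAB : ∀ i j, Commute (A i) (B j)) {p q : ℕ}
    (hE : Subsingleton (koszulHomology (fun i => koszulInduced B (A i) q) p))
    (G : KoszulChain n p (KoszulChain m q V)) (hG : ∀ s, koszulDDown B q (G s) = 0)
    (hdG : ∀ s, koszulDDown (compLeftTuple A _) p G s ∈ LinearMap.range (koszulD B q)) :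
    ∃ (Y : KoszulChain n (p + 1) (KoszulChain m q V))
      (Z : KoszulChain n p (KoszulChain m (q + 1) V)),
      (∀ s, koszulDDown B q (Y s) = 0) ∧
        ∀ s, G s = koszulD (compLeftTuple A _) p Y s + koszulD B q (Z s) := by
  let π := toKoszulHomology B q
  let ι := (LinearMap.ker (koszulDDown B q)).subtype
  let Gc : KoszulChain n p (LinearMap.ker (koszulDDown B q)) := fun s => ⟨G s, hG s⟩
  have hcycle : koszulDDown (fun i => koszulInduced B (A i) q) p (π ∘ Gc) = 0 := by
    rw [koszulDDown_comp_of_comp_eq π (toKoszulHomology_comp_cycleTuple A B hAB q)]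
    funext s
    refine (Submodule.Quotient.mk_eq_zero _).2 ?_
    rw [Submodule.mem_comap]
    convert hdG s
    exact (congrFun
      (koszulDDown_comp_of_comp_eq ι (subtype_comp_cycleTuple A B hAB q) p Gc) s).symm
  obtain ⟨Yh, hYh⟩ := (subsingleton_koszulHomology_iff _ p).1 hE _ hcycle
  choose Yc hYc using fun s => Submodule.mkQ_surjective _ (Yh s)
  have hYc' : Yh = π ∘ Yc := funext fun s => (hYc s).symm
  have hmem : ∀ s, G s - koszulD (compLeftTuple A _) p (ι ∘ Yc) s
      ∈ LinearMap.range (koszulD B q) := by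
    intro s
    have h := congrFun hYh s
    rw [hYc', koszulD_comp_of_comp_eq π (toKoszulHomology_comp_cycleTuple A B hAB q)] at h
    have h' := (Submodule.Quotient.eq _).1 h.symm
    rw [Submodule.mem_comap, map_sub] at h'
    rwa [congrFun (koszulD_comp_of_comp_eq ι (subtype_comp_cycleTuple A B hAB q) p Yc) s]
  choose Z hZ using hmem
  exact ⟨ι ∘ Yc, Z, fun s => (Yc s).2, fun s => by rw [hZ s]; abel⟩

end InducedTuple

section Staircase

variable {n m : ℕ} (A : Fin n → Module.End ℂ V) (B : Fin m → Module.End ℂ V)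

lemma koszulDDown_block_eq_zero {k p q : ℕ} (hpq : p + q = k) (x : KoszulChain (n + m) k V)
    (hx : koszulDDown (Fin.append A B) k x = 0) (hsupp : IsSupportedBelow (p + 1) x) (s) :
    koszulDDown B q (block hpq x s) = 0 := by
  cases q with
  | zero => rfl
  | succ q =>
    subst hpq
    funext t
    have h := block_koszulD_append A B (rfl : p + q = p + q) x s t
    rw [show koszulD (Fin.append A B) (p + q) x = 0 from hx, map_zero,
      block_eq_zero_of_isSupportedBelow hsupp _ le_rfl, map_zero] at h
    simpa [koszulDDown] using h.symm

lemma koszulDDown_block_mem_range {k p q : ℕ} (hpq : p + q = k) (x : KoszulChain (n + m) k V)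
    (hx : koszulDDown (Fin.append A B) k x = 0) (s) :
    koszulDDown (compLeftTuple A _) p (block hpq x) s ∈ LinearMap.range (koszulD B q) := by
  cases p with
  | zero => exact ⟨0, map_zero _⟩
  | succ p =>
    obtain ⟨K, rfl⟩ : ∃ K, k = K + 1 := ⟨p + q, by omega⟩
    refine ⟨-(-1 : ℂ) ^ p • block (by omega : p + (q + 1) = K + 1) x s, ?_⟩
    funext t
    have h := block_koszulD_append A B (by omega : p + q = K) x s t
    rw [show koszulD (Fin.append A B) K x = 0 from hx, map_zero] at h
    rw [map_smul, Pi.smul_apply, neg_smul, neg_eq_iff_add_eq_zero, add_comm]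
    exact h.symm

lemma exists_isSupportedBelow_sub_koszulD (hAB : ∀ i j, Commute (A i) (B j)) {k p q : ℕ}
    (hpq : p + q = k) (hE : Subsingleton (koszulHomology (fun i => koszulInduced B (A i) q) p))
    (x : KoszulChain (n + m) k V) (hx : koszulDDown (Fin.append A B) k x = 0)
    (hsupp : IsSupportedBelow (p + 1) x) :
    ∃ w, IsSupportedBelow p (x - koszulD (Fin.append A B) k w) := by
  obtain ⟨Y, Z, hY, hYZ⟩ := exists_eq_koszulD_add_koszulD A B hAB hE (block hpq x)
    (koszulDDown_block_eq_zero A B hpq x hx hsupp) (koszulDDown_block_mem_range A B hpq x hx)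
  -- the sign `(-1) ^ p` is the one carried by `d_B` in bidegree `(p, q + 1)`
  set w := ofBlock (by omega : p + 1 + q = k + 1) Y
    + (-1 : ℂ) ^ p • ofBlock (by omega : p + (q + 1) = k + 1) Z
  suffices h : ∀ r q' (h : r + q' = k), p ≤ r →
      block h x = block h (koszulD (Fin.append A B) k w) by
    refine ⟨w, fun u hu => ?_⟩
    rw [apply_eq_block (x - _) u, map_sub, h _ _ _ hu, sub_self]
    rfl
  intro r q' h hr
  funext s t
  simp only [w, block_koszulD_append A B h, map_add, map_smul, Pi.add_apply, Pi.smul_apply]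
  rcases hr.eq_or_lt with rfl | hr
  · obtain rfl : q' = q := by omega
    simp (disch := omega) only [block_ofBlock, block_ofBlock_of_ne]
    simp only [map_zero, Pi.zero_apply, smul_zero, zero_add, add_zero, smul_smul, ← pow_add,
      Even.neg_one_pow ⟨p, rfl⟩, one_smul]
    exact congrFun (hYZ s) t
  rcases (Nat.succ_le_of_lt hr).eq_or_lt with rfl | hr
  · obtain rfl : q = q' + 1 := by omega
    rw [block_eq_zero_of_isSupportedBelow hsupp h le_rfl]
    simp (disch := omega) only [block_ofBlock, block_ofBlock_of_ne]
    rw [show koszulD B q' (Y s) = 0 from hY s]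
    simp
  · rw [block_eq_zero_of_isSupportedBelow hsupp h hr.le]
    simp (disch := omega) [block_ofBlock_of_ne]

lemma mem_range_koszulD_append_of_isSupportedBelow
    (hcomm : ∀ i j, Commute (Fin.append A B i) (Fin.append A B j)) {k : ℕ}
    (hE : ∀ p q, p + q = k →
      Subsingleton (koszulHomology (fun i => koszulInduced B (A i) q) p))
    {P : ℕ} (hP : P ≤ k + 1) (x : KoszulChain (n + m) k V)
    (hx : koszulDDown (Fin.append A B) k x = 0) (hsupp : IsSupportedBelow P x) :
    x ∈ LinearMap.range (koszulD (Fin.append A B) k) := by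
  have hAB : ∀ i j, Commute (A i) (B j) := fun i j => by
    simpa using hcomm (Fin.castAdd m i) (Fin.natAdd n j)
  induction P generalizing x with
  | zero => exact ⟨0, by rw [map_zero]; exact funext fun u => (hsupp u (Nat.zero_le _)).symm⟩
  | succ p ih =>
    obtain ⟨w, hw⟩ := exists_isSupportedBelow_sub_koszulD A B hAB (by omega : p + (k - p) = k)
      (hE _ _ (by omega)) x hx hsupp
    obtain ⟨w', hw'⟩ := ih (by omega) (x - koszulD (Fin.append A B) k w)
      (by rw [map_sub, hx, koszulDDown_koszulD _ hcomm, sub_zero]) hw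
    exact ⟨w + w', by rw [map_add, hw', add_sub_cancel]⟩

end Staircase

theorem trivial_homology_of_trivial_E2_general
    {V : Type*} [AddCommGroup V] [Module ℂ V] {n m : ℕ}
    (A : Fin n → Module.End ℂ V) (B : Fin m → Module.End ℂ V)
    (hcomm : ∀ i j, Commute (Fin.append A B i) (Fin.append A B j))
    (k : ℕ)
    (h : ∀ p q, p ≤ n → q ≤ m → p + q = k →
      Subsingleton (koszulHomology (fun i => koszulInduced B (A i) q) p)) :
    Subsingleton (koszulHomology (Fin.append A B) k) := by
  have hE : ∀ p q, p + q = k →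
      Subsingleton (koszulHomology (fun i => koszulInduced B (A i) q) p) := by
    intro p q hpq
    by_cases hp : p ≤ n
    · by_cases hq : q ≤ m
      · exact h p q hp hq hpq
      · have := subsingleton_koszulHomology_of_length_lt B (not_le.mp hq)
        exact subsingleton_koszulHomology_of_subsingleton _ p
    · exact subsingleton_koszulHomology_of_length_lt _ (not_le.mp hp)
  refine (subsingleton_koszulHomology_iff _ k).2 fun x hx => ?_
  refine mem_range_koszulD_append_of_isSupportedBelow A B hcomm hE le_rfl x hx fun u hu => ?_
  have := card_lowerPart_le_card u.1
  omega

/-- If `A ⊕ B` is a commuting `(n+m)`-tuple and all the Koszul homology groups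
`H_p(A, H_q(B,V))` with `p + q = k` vanish, then `H_k(A ⊕ B, V)` vanishes. -/
theorem trivial_homology_of_trivial_E2
    {V : Type*} [AddCommGroup V] [Module ℂ V] {n m : ℕ}
    (A : Fin n → Module.End ℂ V) (B : Fin m → Module.End ℂ V)
    (hcomm : ∀ i j, Commute (Fin.append A B i) (Fin.append A B j))
    (k : ℕ) (hk : k ≤ n + m)
    (h : ∀ p q, p ≤ n → q ≤ m → p + q = k →
      Subsingleton (koszulHomology (fun i => koszulInduced B (A i) q) p)) :
    Subsingleton (koszulHomology (Fin.append A B) k) :=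
  trivial_homology_of_trivial_E2_general A B hcomm k h

end KN
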